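/- arXiv:1211.7264 — 2 statements merged into one kernel-verified Lean document; each statement's English description precedes it below -/
import Mathlib

section
/- Let 𝔧 be a strongly stable ideal in R and 𝔊 a [𝔧,m]-marked set. Then 𝔊 is a [𝔧,m]-marked basis if and only if: (i) for every f_α ∈ 𝔊 and every variable x_i > min(x^α), the polynomial x_i f_α reduces to 0 by 𝔊_∗-reduction; and (ii) for every monomial x^β ∈ 𝔧_{≤m} \ B_𝔧, x^β reduces by 𝔊_∗-reduction to a polynomial g_β with supp(g_β) ⊆ N(𝔧)_{≤m}. -/
open MvPolynomial

namespace Paper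

/-- Monomials (exponent vectors) in `N` variables. -/
abbrev Mon (N : ℕ) := Fin N →₀ ℕ

variable {N : ℕ}

/-- Total degree of a monomial. -/
def mdeg (u : Mon N) : ℕ := u.sum fun _ e => e

/-- `BorelStep a b` : `b` is obtained from `a` by one increasing elementary move,
i.e. `x^a · x_j = x^b · x_i` with `i < j`. -/
def BorelStep (a b : Mon N) : Prop :=
  ∃ i j : Fin N, i < j ∧ a + Finsupp.single j 1 = b + Finsupp.single i 1

/-- `BorelLt a b` : `a <_B b`, i.e. `b` is obtained from `a` by a nonempty
sequence of increasing elementary moves. -/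
def BorelLt (a b : Mon N) : Prop := Relation.TransGen BorelStep a b

/-- A (combinatorially encoded) monomial ideal: a set of monomials closed
under multiplication by monomials. -/
def MonIdeal (J : Set (Mon N)) : Prop := ∀ u ∈ J, ∀ d : Mon N, u + d ∈ J

/-- A strongly stable monomial ideal. -/
def StronglyStable (J : Set (Mon N)) : Prop :=
  MonIdeal J ∧ ∀ b ∈ J, ∀ a, BorelLt b a → a ∈ J

/-- The minimal monomial basis `B_J` of a monomial ideal. -/
def MinBasis (J : Set (Mon N)) : Set (Mon N) :=
  {u | u ∈ J ∧ ∀ v ∈ J, v ≤ u → v = u}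

/-- `min(x^a) ≥ max(x^h)`. -/
def StarCond (a h : Mon N) : Prop :=
  ∀ i j : Fin N, a i ≠ 0 → h j ≠ 0 → j ≤ i


variable (K : Type) [Field K]

/-- The monomial `x^u` as a polynomial. -/
noncomputable def mono {N : ℕ} (u : Mon N) : MvPolynomial (Fin N) K :=
  MvPolynomial.monomial u (1 : K)

/-- The (actual) monomial ideal of `S` spanned by a set of monomials. -/
noncomputable def idealOf {N : ℕ} (J : Set (Mon N)) : Ideal (MvPolynomial (Fin N) K) :=
  Ideal.span (mono K '' J)

/-- The irrelevant maximal ideal `(x_0, …, x_n)`. -/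
noncomputable def irrel (N : ℕ) : Ideal (MvPolynomial (Fin N) K) :=
  Ideal.span (Set.range MvPolynomial.X)

/-- The saturation `I^sat = ⋃_j (I : (x_0,…,x_n)^j)`. -/
noncomputable def satIdeal {N : ℕ} (I : Ideal (MvPolynomial (Fin N) K)) :
    Ideal (MvPolynomial (Fin N) K) :=
  ⨆ k : ℕ, Submodule.colon I ((irrel K N ^ k : Ideal (MvPolynomial (Fin N) K)) : Set (MvPolynomial (Fin N) K))

/-- The satiety of a homogeneous ideal: the smallest `m` such that
`I_t = (I^sat)_t` for all `t ≥ m`. -/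
noncomputable def satiety {N : ℕ} (I : Ideal (MvPolynomial (Fin N) K)) : ℕ :=
  sInf {m | ∀ t, m ≤ t → ∀ p : MvPolynomial (Fin N) K,
    p.IsHomogeneous t → (p ∈ I ↔ p ∈ satIdeal K I)}

/-- The saturation of a combinatorial monomial ideal. -/
def msat {N : ℕ} (J : Set (Mon N)) : Set (Mon N) :=
  {u | ∃ k : ℕ, ∀ d : Mon N, mdeg d = k → u + d ∈ J}

/-- The satiety of a combinatorial monomial ideal. -/
noncomputable def msatiety {N : ℕ} (J : Set (Mon N)) : ℕ :=
  sInf {m | ∀ u : Mon N, m ≤ mdeg u → (u ∈ J ↔ u ∈ msat J)}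

/-- A non-homogeneous `𝔧`-marked set: marked polynomials `f_α` with pairwise
distinct head terms forming `B_𝔧` and tails supported outside `𝔧`. -/
def NHMarkedSet {N : ℕ} (𝔧 : Set (Mon N)) (f : Mon N → MvPolynomial (Fin N) K) : Prop :=
  ∀ α ∈ MinBasis 𝔧,
    MvPolynomial.coeff α (f α) = 1 ∧
    ∀ u ∈ (f α).support, u ≠ α → u ∉ 𝔧

/-- One step of the `𝔊_∗`-reduction: the monomial `x^γ = x^α ∗_𝔧 x^η` of the
support of `g` is replaced by `x^η · T(f_α)`. -/
def RStep {N : ℕ} (𝔧 : Set (Mon N)) (f : Mon N → MvPolynomial (Fin N) K)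
    (g g₁ : MvPolynomial (Fin N) K) : Prop :=
  ∃ γ α η : Mon N, γ ∈ g.support ∧ γ ∈ 𝔧 ∧ α ∈ MinBasis 𝔧 ∧ γ = α + η ∧
    StarCond α η ∧
    g₁ = g - MvPolynomial.coeff γ g • (mono K η * f α)

/-- The `𝔊_∗`-reduction relation (reflexive-transitive closure of `RStep`). -/
def Reduces {N : ℕ} (𝔧 : Set (Mon N)) (f : Mon N → MvPolynomial (Fin N) K) :
    MvPolynomial (Fin N) K → MvPolynomial (Fin N) K → Prop :=
  Relation.ReflTransGen (RStep K 𝔧 f)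

/-- `g` is reduced: `supp(g) ∩ 𝔧 = ∅`. -/
def IsReducedPoly {N : ℕ} (𝔧 : Set (Mon N)) (g : MvPolynomial (Fin N) K) : Prop :=
  ∀ u ∈ g.support, u ∉ 𝔧

/-- A `[𝔧,m]`-marked set: a n.h. `𝔧`-marked set whose tails are supported in
`N(𝔧)_{≤ max{m,|α|}}`. -/
def JmMarkedSet {N : ℕ} (𝔧 : Set (Mon N)) (m : ℕ)
    (f : Mon N → MvPolynomial (Fin N) K) : Prop :=
  ∀ α ∈ MinBasis 𝔧,
    MvPolynomial.coeff α (f α) = 1 ∧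
    ∀ u ∈ (f α).support, u ≠ α → (u ∉ 𝔧 ∧ mdeg u ≤ max m (mdeg α))

/-- The ideal `(𝔊)` generated by a marked set. -/
noncomputable def idealG {N : ℕ} (𝔧 : Set (Mon N))
    (f : Mon N → MvPolynomial (Fin N) K) : Ideal (MvPolynomial (Fin N) K) :=
  Ideal.span (f '' MinBasis 𝔧)

/-- A `[𝔧,m]`-completion of `𝔊`: marked polynomials `f_β ∈ (𝔊)` with pairwise
distinct head terms the monomials of `𝔧_{≤m} \ B_𝔧` and tails in `N(𝔧)_{≤m}`. -/
def IsCompletion {N : ℕ} (𝔧 : Set (Mon N)) (m : ℕ)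
    (f h : Mon N → MvPolynomial (Fin N) K) : Prop :=
  ∀ β : Mon N, β ∈ 𝔧 → mdeg β ≤ m → β ∉ MinBasis 𝔧 →
    h β ∈ idealG K 𝔧 f ∧
    MvPolynomial.coeff β (h β) = 1 ∧
    ∀ u ∈ (h β).support, u ≠ β → (u ∉ 𝔧 ∧ mdeg u ≤ m)

/-- `g'` is a `[𝔧,m]`-reduced form of `g` modulo `(𝔊)`. -/
def IsReducedForm {N : ℕ} (𝔧 : Set (Mon N)) (m : ℕ)
    (f : Mon N → MvPolynomial (Fin N) K)
    (g g' : MvPolynomial (Fin N) K) : Prop :=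
  (∀ u ∈ g'.support, u ∉ 𝔧 ∧ mdeg u ≤ max m g.totalDegree) ∧
  g - g' ∈ idealG K 𝔧 f

/-- `R_{≤ t}`: the `K`-subspace of polynomials of degree at most `t`. -/
noncomputable def degLE (N : ℕ) (t : ℕ) : Submodule K (MvPolynomial (Fin N) K) where
  carrier := {g | ∀ u ∈ g.support, mdeg u ≤ t}
  zero_mem' := by simp
  add_mem' := by
    intro a b ha hb u hu
    rcases Finset.mem_union.mp (MvPolynomial.support_add hu) with h | h
    · exact ha u h
    · exact hb u h
  smul_mem' := by
    intro c a ha u hu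
    exact ha u (MvPolynomial.support_smul hu)

/-- `⟨N(𝔧)_{≤t}⟩`: the `K`-span of the monomials outside `𝔧` of degree `≤ t`. -/
noncomputable def spanNLE {N : ℕ} (𝔧 : Set (Mon N)) (t : ℕ) :
    Submodule K (MvPolynomial (Fin N) K) :=
  Submodule.span K (mono K '' {u : Mon N | u ∉ 𝔧 ∧ mdeg u ≤ t})

/-- `(𝔊)_{≤t}`: the `K`-subspace of elements of `(𝔊)` of degree `≤ t`. -/
noncomputable def GleSub {N : ℕ} (𝔧 : Set (Mon N))
    (f : Mon N → MvPolynomial (Fin N) K) (t : ℕ) :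
    Submodule K (MvPolynomial (Fin N) K) :=
  (idealG K 𝔧 f).restrictScalars K ⊓ degLE K N t

/-- A `[𝔧,m]`-marked basis: a `[𝔧,m]`-marked set with
`R_{≤t} = ⟨N(𝔧)_{≤t}⟩ ⊕ (𝔊)_{≤t}` for all `t ≥ m`. -/
def JmMarkedBasis {N : ℕ} (𝔧 : Set (Mon N)) (m : ℕ)
    (f : Mon N → MvPolynomial (Fin N) K) : Prop :=
  JmMarkedSet K 𝔧 m f ∧
  ∀ t, m ≤ t →
    Disjoint (spanNLE K 𝔧 t) (GleSub K 𝔧 f t) ∧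
    spanNLE K 𝔧 t ⊔ GleSub K 𝔧 f t = degLE K N t

/-!
Over a strongly stable `𝔧`, every `x^γ ∈ 𝔧` factors uniquely as `x^α ∗_𝔧 x^η` with
`x^α ∈ B_𝔧` and `max(x^η) ≤ min(x^α)`. The whole argument rests on one order fact: if
`x^u ∉ 𝔧` and `x^η x^u = x^α' ∗_𝔧 x^η'`, then `η' < η` in the colexicographic order (largest
variable most significant), a well-order compatible with multiplication. Consequently
`𝔊_∗`-reduction can always be carried on to a polynomial supported on `N(𝔧)`, and the star products
`x^η f_α` are triangular with respect to their heads `x^(α+η)`, so their span meets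
`⟨N(𝔧)⟩` only in `0`.

If `𝔊` is a marked basis, a reduced form of `x_i f_α` (resp. of `x^β`) differs from `0`
(resp. from the `⟨N(𝔧)_{≤m}⟩`-component of `x^β`) by an element of `(𝔊)` supported on `N(𝔧)`,
hence equals it. Conversely, (i) rewrites `x^δ f_α` through star products with smaller
cofactors, so `(𝔊)` lies in their span and the sum is direct; (ii) yields a completion
of `𝔊`, whose shifts express every `x^γ ∈ 𝔧_{≤t}` modulo `(𝔊)_{≤t}` through monomials with
smaller cofactors.
-/

section StarDecomposition

variable {J : Set (Mon N)} {α η α' η' γ u : Mon N}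

lemma mdeg_add (a b : Mon N) : mdeg (a + b) = mdeg a + mdeg b :=
  map_add Finsupp.degree a b

lemma mdeg_single (i : Fin N) (k : ℕ) : mdeg (Finsupp.single i k) = k :=
  Finsupp.degree_single i k

lemma exists_le_mdeg_eq (η : Mon N) : ∀ {k : ℕ}, k ≤ mdeg η → ∃ δ ≤ η, mdeg δ = k
  | 0, _ => ⟨0, zero_le, by simp [mdeg]⟩
  | k + 1, hk => by
    obtain ⟨δ, hδη, hδ⟩ := exists_le_mdeg_eq η (k := k) (by omega)
    obtain ⟨i, hi⟩ : (η - δ).support.Nonempty := by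
      rw [Finsupp.support_nonempty_iff]
      intro h
      have : mdeg η = mdeg δ := by rw [← add_tsub_cancel_of_le hδη, h, add_zero]
      omega
    refine ⟨δ + Finsupp.single i 1, ?_, by rw [mdeg_add, hδ, mdeg_single]⟩
    calc δ + Finsupp.single i 1 ≤ δ + (η - δ) :=
          add_le_add le_rfl (Finsupp.single_le_iff.mpr
            (Nat.one_le_iff_ne_zero.mpr (Finsupp.mem_support_iff.mp hi)))
      _ = η := add_tsub_cancel_of_le hδη

/-- `IsStarDecomp J γ α η` encodes `x^γ = x^α ∗_𝔧 x^η`. -/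
def IsStarDecomp (J : Set (Mon N)) (γ α η : Mon N) : Prop :=
  α ∈ MinBasis J ∧ StarCond α η ∧ γ = α + η

lemma zero_mem_minBasis (h : (0 : Mon N) ∈ J) : 0 ∈ MinBasis J :=
  ⟨h, fun _ _ hv => le_antisymm hv zero_le⟩

lemma StarCond.sub_single_add_single {ℓ : Fin N} (hst : StarCond α η) (hℓ : α ℓ ≠ 0)
    (hmin : ∀ i, α i ≠ 0 → ℓ ≤ i) :
    StarCond (α - Finsupp.single ℓ 1) (η + Finsupp.single ℓ 1) := by
  intro i j hi hj
  have hαi : α i ≠ 0 := fun h => hi (by simp [h])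
  have hjℓ : j ≤ ℓ := by
    by_cases hjℓ : j = ℓ
    · exact hjℓ.le
    · exact hst ℓ j hℓ (by simpa [Finsupp.single_apply, Ne.symm hjℓ] using hj)
  exact hjℓ.trans (hmin i hαi)

lemma sub_single_mem_of_notMem_minBasis (hJ : StronglyStable J) (hα : α ∈ J)
    (hB : α ∉ MinBasis J) {ℓ : Fin N} (hℓ : α ℓ ≠ 0) (hmin : ∀ i, α i ≠ 0 → ℓ ≤ i) :
    α - Finsupp.single ℓ 1 ∈ J := by
  obtain ⟨v, hv, hvα, hne⟩ : ∃ v ∈ J, v ≤ α ∧ v ≠ α := by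
    by_contra! h
    exact hB ⟨hα, h⟩
  obtain ⟨k, hk⟩ : ∃ k, v k < α k := by
    by_contra! h
    exact hne (le_antisymm hvα (Finsupp.le_def.mpr h))
  have hsingle : ∀ i, α i ≠ 0 → Finsupp.single i 1 ≤ α := fun i hi =>
    Finsupp.single_le_iff.mpr (Nat.one_le_iff_ne_zero.mpr hi)
  have hk' : α - Finsupp.single k 1 ∈ J := by
    have hle : v ≤ α - Finsupp.single k 1 := by
      intro i
      have := Finsupp.le_def.mp hvα i
      by_cases h : i = k
      · subst h
        simp only [Finsupp.coe_tsub, Pi.sub_apply, Finsupp.single_eq_same]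
        omega
      · simp [Ne.symm h, this]
    obtain ⟨c, hc⟩ := exists_add_of_le hle
    exact hc ▸ hJ.1 v hv c
  rcases eq_or_ne k ℓ with rfl | hkℓ
  · exact hk'
  refine hJ.2 _ hk' _ (Relation.TransGen.single ⟨ℓ, k, (hmin k (by omega)).lt_of_ne' hkℓ, ?_⟩)
  rw [tsub_add_cancel_of_le (hsingle k (by omega)), tsub_add_cancel_of_le (hsingle ℓ hℓ)]

lemma exists_isStarDecomp (hJ : StronglyStable J) (hγ : γ ∈ J) :
    ∃ α η, IsStarDecomp J γ α η := by
  suffices h : ∀ α η, α ∈ J → StarCond α η → ∃ α' η', IsStarDecomp J (α + η) α' η' by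
    simpa using h γ 0 hγ (fun _ _ _ h => absurd rfl h)
  intro α
  induction α using WellFoundedLT.induction with
  | _ α ih =>
  intro η hα hst
  by_cases hB : α ∈ MinBasis J
  · exact ⟨α, η, hB, hst, rfl⟩
  have hα0 : α ≠ 0 := by rintro rfl; exact hB (zero_mem_minBasis hα)
  set ℓ := α.support.min' (Finsupp.support_nonempty_iff.mpr hα0)
  have hℓ : α ℓ ≠ 0 := Finsupp.mem_support_iff.mp (Finset.min'_mem _ _)
  have hmin : ∀ i, α i ≠ 0 → ℓ ≤ i := fun i hi =>
    Finset.min'_le _ _ (Finsupp.mem_support_iff.mpr hi)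
  have hle : Finsupp.single ℓ 1 ≤ α := Finsupp.single_le_iff.mpr (Nat.one_le_iff_ne_zero.mpr hℓ)
  have hsplit : α - Finsupp.single ℓ 1 + Finsupp.single ℓ 1 = α := tsub_add_cancel_of_le hle
  have hlt : α - Finsupp.single ℓ 1 < α := by
    conv_rhs => rw [← hsplit]
    exact lt_add_of_pos_right _ (by simp [pos_iff_ne_zero])
  obtain ⟨α', η', hd⟩ := ih _ hlt _ (sub_single_mem_of_notMem_minBasis hJ hα hB hℓ hmin)
    (hst.sub_single_add_single hℓ hmin)
  exact ⟨α', η', by rwa [← add_assoc, add_right_comm, hsplit] at hd⟩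

lemma StarCond.eq_zero_of_lt {i j : Fin N} (hst : StarCond α η) (hi : α i ≠ 0) (hij : i < j) :
    η j = 0 := by
  by_contra h
  exact (hst i j hi h).not_gt hij

lemma le_total_of_starCond (hst : StarCond α η) (hst' : StarCond α' η')
    (h : α + η = α' + η') : α ≤ α' ∨ α' ≤ α := by
  by_contra! hne
  obtain ⟨a, ha⟩ : ∃ a, α' a < α a := by simpa [Finsupp.le_def] using hne.1
  obtain ⟨b, hb⟩ : ∃ b, α b < α' b := by simpa [Finsupp.le_def] using hne.2
  have hcoord := fun i => DFunLike.congr_fun h i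
  simp only [Finsupp.add_apply] at hcoord
  rcases lt_trichotomy a b with hab | rfl | hab
  · have := hst.eq_zero_of_lt (by omega) hab
    have := hcoord b
    omega
  · omega
  · have := hst'.eq_zero_of_lt (by omega) hab
    have := hcoord a
    omega

lemma IsStarDecomp.unique (h : IsStarDecomp J γ α η) (h' : IsStarDecomp J γ α' η') :
    α = α' ∧ η = η' := by
  obtain ⟨hα, hst, rfl⟩ := h
  obtain ⟨hα', hst', heq⟩ := h'
  have : α = α' := (le_total_of_starCond hst hst' heq).elim
    (fun hle => hα'.2 α hα.1 hle) (fun hle => (hα.2 α' hα'.1 hle).symm)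
  subst this
  exact ⟨rfl, add_left_cancel heq⟩

lemma le_of_toColex_le (hst : StarCond α' η') (h : η + u = α' + η')
    (hle : toColex η ≤ toColex η') : α' ≤ u := by
  rcases hle.lt_or_eq with hlt | heq
  · obtain ⟨i, hi, hlt⟩ := Finsupp.Colex.lt_iff.mp hlt
    simp only [ofColex_toColex] at hi hlt
    intro k
    have hk := DFunLike.congr_fun h k
    simp only [Finsupp.add_apply] at hk
    rcases lt_trichotomy k i with hki | rfl | hki
    · have : α' k = 0 := by
        by_contra hα'
        exact (hst k i hα' (by omega)).not_gt hki
      omega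
    · omega
    · have := hi k hki
      omega
  · rw [toColex_inj] at heq
    subst heq
    rw [add_comm η] at h
    exact (add_right_cancel h).ge

lemma toColex_cofactor_lt (hJ : MonIdeal J) (hu : u ∉ J) (hd : IsStarDecomp J (η + u) α' η') :
    toColex η' < toColex η := by
  refine lt_of_not_ge fun hle => hu ?_
  obtain ⟨c, rfl⟩ := exists_add_of_le (le_of_toColex_le hd.2.1 hd.2.2 hle)
  exact hJ _ hd.1.1 c

lemma toColex_cofactor_lt_single (hα : α ∈ MinBasis J) {i j : Fin N} (hji : j < i)
    (hαj : α j ≠ 0) (hd : IsStarDecomp J (Finsupp.single i 1 + α) α' η') :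
    toColex η' < toColex (Finsupp.single i 1) := by
  refine lt_of_not_ge fun hle => ?_
  have hα' : α' = α := hα.2 α' hd.1.1 (le_of_toColex_le hd.2.1 hd.2.2 hle)
  subst hα'
  have hη' : η' = Finsupp.single i 1 := by
    have := hd.2.2
    rw [add_comm] at this
    exact (add_left_cancel this).symm
  exact (hd.2.1 j i hαj (by simp [hη'])).not_gt hji

end StarDecomposition

section Reduction

variable {K} {J : Set (Mon N)} {f : Mon N → MvPolynomial (Fin N) K}
  {α η α' η' u : Mon N} {g q : MvPolynomial (Fin N) K}

lemma coeff_mono_mul (η v : Mon N) (p : MvPolynomial (Fin N) K) :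
    coeff (η + v) (mono K η * p) = coeff v p := by
  rw [mono, coeff_monomial_mul, one_mul]

lemma exists_eq_add_of_mem_support_mono_mul (hu : u ∈ (mono K η * q).support) :
    ∃ v ∈ q.support, u = η + v := by
  rw [mem_support_iff, mono, coeff_monomial_mul', one_mul] at hu
  split_ifs at hu with hle
  · exact ⟨u - η, mem_support_iff.mpr hu, (add_tsub_cancel_of_le hle).symm⟩
  · exact absurd rfl hu

lemma toColex_cofactor_lt_of_mem_support (hJ : MonIdeal J) {β : Mon N}
    (hq : ∀ v ∈ q.support, v ≠ β → v ∉ J) (hu : u ∈ (mono K η * q).support)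
    (hne : u ≠ η + β) (hd : IsStarDecomp J u α' η') : toColex η' < toColex η := by
  obtain ⟨v, hv, rfl⟩ := exists_eq_add_of_mem_support_mono_mul hu
  exact toColex_cofactor_lt hJ (hq v hv (by rintro rfl; exact hne rfl)) hd

lemma JmMarkedSet.nhMarkedSet {m : ℕ} (h : JmMarkedSet K J m f) : NHMarkedSet K J f :=
  fun α hα => ⟨(h α hα).1, fun u hu hne => ((h α hα).2 u hu hne).1⟩

lemma mem_support_of_mem_support_reduce (hf : NHMarkedSet K J f) (hα : α ∈ MinBasis J)
    (hu : u ∈ (g - coeff (α + η) g • (mono K η * f α)).support) :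
    u ≠ α + η ∧ (u ∈ g.support ∨ u ∈ (mono K η * f α).support) := by
  refine ⟨?_, ?_⟩
  · rintro rfl
    rw [mem_support_iff, coeff_sub, coeff_smul, add_comm α, coeff_mono_mul, (hf α hα).1] at hu
    simp at hu
  · rcases Finset.mem_union.mp (support_sub (Fin N) _ _ hu) with h | h
    · exact .inl h
    · exact .inr (support_smul h)

lemma toColex_cofactor_lt_of_mem_support_reduce (hJ : MonIdeal J) (hf : NHMarkedSet K J f)
    (hα : α ∈ MinBasis J) (hu : u ∈ (g - coeff (α + η) g • (mono K η * f α)).support)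
    (hug : u ∉ g.support) (hd : IsStarDecomp J u α' η') : toColex η' < toColex η := by
  obtain ⟨hne, hu | hu⟩ := mem_support_of_mem_support_reduce hf hα hu
  · exact absurd hu hug
  · exact toColex_cofactor_lt_of_mem_support hJ (hf α hα).2 hu (by rwa [add_comm]) hd

lemma RStep.sub_mem_idealG {g₁ : MvPolynomial (Fin N) K} (h : RStep K J f g g₁) :
    g - g₁ ∈ idealG K J f := by
  obtain ⟨γ, α, η, -, -, hα, -, -, rfl⟩ := h
  rw [sub_sub_cancel, smul_eq_C_mul]
  exact Ideal.mul_mem_left _ _ (Ideal.mul_mem_left _ _ (Ideal.subset_span ⟨α, hα, rfl⟩))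

lemma Reduces.sub_mem_idealG {h : MvPolynomial (Fin N) K} (hr : Reduces K J f g h) :
    g - h ∈ idealG K J f := by
  induction hr using Relation.ReflTransGen.head_induction_on with
  | refl => simp
  | head hs _ ih => simpa using add_mem hs.sub_mem_idealG ih

theorem exists_reduces_isReducedPoly (hJ : StronglyStable J) (hf : NHMarkedSet K J f)
    (g : MvPolynomial (Fin N) K) : ∃ g', Reduces K J f g g' ∧ IsReducedPoly K J g' := by
  classical
  choose! base cof hdec using fun γ (hγ : γ ∈ J) => exists_isStarDecomp hJ hγ
  -- Reducing the monomial of largest key makes every monomial of `𝔧` in the result smaller.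
  let key : Mon N → Colex (Fin N →₀ ℕ) ×ₗ Colex (Fin N →₀ ℕ) :=
    fun γ => toLex (toColex (cof γ), toColex γ)
  let μ : MvPolynomial (Fin N) K → WithBot (Colex (Fin N →₀ ℕ) ×ₗ Colex (Fin N →₀ ℕ)) :=
    fun g => (g.support.filter (· ∈ J)).sup fun γ => (key γ : WithBot _)
  induction g using (InvImage.wf μ wellFounded_lt).induction with
  | _ g ih =>
  by_cases hg : IsReducedPoly K J g
  · exact ⟨g, .refl, hg⟩
  have hne : (g.support.filter (· ∈ J)).Nonempty := by
    simpa [IsReducedPoly, Finset.Nonempty] using hg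
  obtain ⟨γ, hγ, hmax⟩ := Finset.exists_max_image _ key hne
  obtain ⟨hγg, hγJ⟩ := Finset.mem_filter.mp hγ
  obtain ⟨hα, hst, hγeq⟩ := hdec γ hγJ
  obtain ⟨g₁, hg₁⟩ : ∃ g₁, g₁ = g - coeff (base γ + cof γ) g • (mono K (cof γ) * f (base γ)) :=
    ⟨_, rfl⟩
  have hstep : RStep K J f g g₁ := ⟨γ, base γ, cof γ, hγg, hγJ, hα, hγeq, hst, by rw [hg₁, ← hγeq]⟩
  have hμ : μ g = key γ := le_antisymm
    (Finset.sup_le fun u hu => WithBot.coe_le_coe.mpr (hmax u hu)) (Finset.le_sup_of_le hγ le_rfl)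
  have hlt : μ g₁ < μ g := by
    rw [hμ, Finset.sup_lt_iff (WithBot.bot_lt_coe _)]
    intro u hu
    obtain ⟨hug₁, huJ⟩ := Finset.mem_filter.mp hu
    rw [hg₁] at hug₁
    rw [WithBot.coe_lt_coe]
    by_cases hug : u ∈ g.support
    · refine (hmax u (Finset.mem_filter.mpr ⟨hug, huJ⟩)).lt_of_ne fun h => ?_
      have : u = γ := by simpa [key] using congrArg (fun k => ofColex (ofLex k).2) h
      exact (mem_support_of_mem_support_reduce hf hα hug₁).1 (this.trans hγeq)
    · exact Prod.Lex.left _ _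
        (toColex_cofactor_lt_of_mem_support_reduce hJ.1 hf hα hug₁ hug (hdec u huJ))
  obtain ⟨g', hred, hg'⟩ := ih g₁ hlt
  exact ⟨g', .head hstep hred, hg'⟩

end Reduction

section StarSpan

variable {K} {J : Set (Mon N)} {f : Mon N → MvPolynomial (Fin N) K}
  {α η : Mon N} {g h p : MvPolynomial (Fin N) K}

lemma mem_of_forall_mono_mem (S : Submodule K (MvPolynomial (Fin N) K))
    (h : ∀ u ∈ p.support, mono K u ∈ S) : p ∈ S := by
  rw [p.as_sum]
  refine S.sum_mem fun u hu => ?_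
  simpa [mono, smul_monomial] using S.smul_mem (coeff u p) (h u hu)

lemma mono_mul_mono (a b : Mon N) : mono K a * mono K b = mono K (a + b) := by
  rw [mono, mono, mono, monomial_mul, one_mul]

lemma mul_mem_of_forall_mono_mul_mem (S : Submodule K (MvPolynomial (Fin N) K))
    (h : ∀ δ, mono K δ * p ∈ S) (r : MvPolynomial (Fin N) K) : r * p ∈ S := by
  induction r using MvPolynomial.induction_on' with
  | monomial δ c =>
    have := S.smul_mem c (h δ)
    rwa [mono, ← smul_mul_assoc, smul_monomial, smul_eq_mul, mul_one] at this
  | add r s hr hs => rw [add_mul]; exact add_mem hr hs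

variable (K J f) in
noncomputable def starSpan : Submodule K (MvPolynomial (Fin N) K) :=
  Submodule.span K ((fun p : Mon N × Mon N => mono K p.2 * f p.1) ''
    {p | p.1 ∈ MinBasis J ∧ StarCond p.1 p.2})

variable (K J f) in
def multiplesBelow (b : Mon N) : Set (MvPolynomial (Fin N) K) :=
  {q | ∃ α ∈ MinBasis J, ∃ η, toColex η < toColex b ∧ q = mono K η * f α}

variable (K J) in
def CofactorsBelow (b : Mon N) (g : MvPolynomial (Fin N) K) : Prop :=
  ∀ γ ∈ g.support, ∀ α η, IsStarDecomp J γ α η → toColex η < toColex b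

lemma Reduces.sub_mem_span_multiplesBelow (hJ : MonIdeal J) (hf : NHMarkedSet K J f)
    {b : Mon N} (hr : Reduces K J f g h) (hg : CofactorsBelow K J b g) :
    g - h ∈ Submodule.span K (multiplesBelow K J f b) := by
  induction hr using Relation.ReflTransGen.head_induction_on with
  | refl => simp
  | @head g g₁ hs _ ih =>
    obtain ⟨γ, α, η, hγg, -, hα, rfl, hst, rfl⟩ := hs
    have hη : toColex η < toColex b := hg _ hγg α η ⟨hα, hst, rfl⟩
    have hg₁ : CofactorsBelow K J b (g - coeff (α + η) g • (mono K η * f α)) := by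
      intro u hu α' η' hd
      by_cases hug : u ∈ g.support
      · exact hg u hug α' η' hd
      · exact (toColex_cofactor_lt_of_mem_support_reduce hJ hf hα hu hug hd).trans hη
    rw [← sub_add_sub_cancel _ (g - _), sub_sub_cancel]
    exact add_mem (Submodule.smul_mem _ _ (Submodule.subset_span ⟨α, hα, η, hη, rfl⟩))
      (ih hg₁)

lemma cofactorsBelow_X_mul (hJ : MonIdeal J) (hf : NHMarkedSet K J f) (hα : α ∈ MinBasis J)
    {i j : Fin N} (hji : j < i) (hαj : α j ≠ 0) :
    CofactorsBelow K J (Finsupp.single i 1) (X i * f α) := by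
  intro γ hγ α' η' hd
  rw [X, ← mono] at hγ
  by_cases hhead : γ = Finsupp.single i 1 + α
  · subst hhead
    exact toColex_cofactor_lt_single hα hji hαj hd
  · exact toColex_cofactor_lt_of_mem_support hJ (hf α hα).2 hγ hhead hd

lemma mono_mul_mem_starSpan (hJ : MonIdeal J) (hf : NHMarkedSet K J f)
    (hred : ∀ α ∈ MinBasis J, ∀ i : Fin N, (∃ j : Fin N, j < i ∧ α j ≠ 0) →
      Reduces K J f (X i * f α) 0)
    (δ : Mon N) : ∀ α ∈ MinBasis J, mono K δ * f α ∈ starSpan K J f := by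
  induction δ using (InvImage.wf (toColex (α := Mon N)) wellFounded_lt).induction with
  | _ δ ih =>
  intro α hα
  by_cases hst : StarCond α δ
  · exact Submodule.subset_span ⟨(α, δ), ⟨hα, hst⟩, rfl⟩
  obtain ⟨j, i, hαj, hδi, hji⟩ : ∃ j i, α j ≠ 0 ∧ δ i ≠ 0 ∧ j < i := by
    simpa [StarCond] using hst
  -- `x_i f_α` is a combination of `x^η f_β` with `η <_Colex x_i`, so
  -- `x^δ f_α = x^(δ - x_i) (x_i f_α)` only involves multiples with cofactor `<_Colex δ`.
  have hXf : X i * f α ∈ Submodule.span K (multiplesBelow K J f (Finsupp.single i 1)) := by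
    simpa using (hred α hα i ⟨j, hji, hαj⟩).sub_mem_span_multiplesBelow hJ hf
      (cofactorsBelow_X_mul hJ hf hα hji hαj)
  have hle : Finsupp.single i 1 ≤ δ := Finsupp.single_le_iff.mpr (Nat.one_le_iff_ne_zero.mpr hδi)
  have hδ : Finsupp.single i 1 + (δ - Finsupp.single i 1) = δ := add_tsub_cancel_of_le hle
  have hspan : Submodule.span K (multiplesBelow K J f (Finsupp.single i 1)) ≤
      (starSpan K J f).comap (LinearMap.mulLeft K (mono K (δ - Finsupp.single i 1))) := by
    rw [Submodule.span_le]
    rintro _ ⟨β, hβ, η, hη, rfl⟩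
    have hlt : toColex (δ - Finsupp.single i 1 + η) < toColex δ :=
      calc toColex (δ - Finsupp.single i 1 + η)
          = toColex η + toColex (δ - Finsupp.single i 1) := by rw [add_comm]; rfl
        _ < toColex (Finsupp.single i 1) + toColex (δ - Finsupp.single i 1) :=
          add_lt_add_left hη _
        _ = toColex δ := congrArg toColex hδ
    simpa [← mul_assoc, mono_mul_mono] using ih _ hlt β hβ
  have hsplit : mono K δ * f α = mono K (δ - Finsupp.single i 1) * (X i * f α) := by
    rw [← mul_assoc, X, ← mono, mono_mul_mono, tsub_add_cancel_of_le hle]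
  exact hsplit ▸ hspan hXf

lemma idealG_le_starSpan (h : ∀ δ, ∀ α ∈ MinBasis J, mono K δ * f α ∈ starSpan K J f) :
    (idealG K J f).restrictScalars K ≤ starSpan K J f := by
  suffices ∀ p ∈ idealG K J f, ∀ r, r * p ∈ starSpan K J f from
    fun p hp => by simpa using this p hp 1
  intro p hp
  induction hp using Submodule.span_induction with
  | mem _ hp =>
    obtain ⟨α, hα, rfl⟩ := hp
    exact mul_mem_of_forall_mono_mul_mem _ (h · α hα)
  | zero => simp
  | add x y _ _ hx hy => exact fun r => by rw [mul_add]; exact add_mem (hx r) (hy r)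
  | smul c x _ hx => exact fun r => by rw [smul_eq_mul, ← mul_assoc]; exact hx _

/-- Triangularity: in a combination of the `x^η f_α`, the term whose cofactor `η` is
`Colex`-largest contributes the monomial `x^(α + η) ∈ 𝔧`, which no other term can cancel. -/
lemma eq_zero_of_mem_starSpan (hJ : MonIdeal J) (hf : NHMarkedSet K J f)
    (hp : p ∈ starSpan K J f) (hred : IsReducedPoly K J p) : p = 0 := by
  classical
  obtain ⟨c, hc, rfl⟩ := (Finsupp.mem_span_image_iff_linearCombination K).mp hp
  by_contra hne
  obtain ⟨q₀, hq₀, hmax⟩ := Finset.exists_max_image c.support (fun q => toColex q.2)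
    (Finsupp.support_nonempty_iff.mpr fun h => hne (by simp [h]))
  obtain ⟨hα₀, hst₀⟩ := hc hq₀
  have hcoeff : coeff (q₀.1 + q₀.2) (Finsupp.linearCombination K
      (fun p : Mon N × Mon N => mono K p.2 * f p.1) c) = c q₀ := by
    rw [Finsupp.linearCombination_apply, Finsupp.sum, coeff_sum, Finset.sum_eq_single q₀]
    · rw [coeff_smul, add_comm, coeff_mono_mul, (hf _ hα₀).1, smul_eq_mul, mul_one]
    · intro q hq hne
      obtain ⟨hα, hst⟩ := hc hq
      rw [coeff_smul, smul_eq_zero, ← notMem_support_iff]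
      refine .inr fun hmem => ?_
      by_cases hhead : q₀.1 + q₀.2 = q.2 + q.1
      · obtain ⟨h1, h2⟩ :=
          IsStarDecomp.unique ⟨hα₀, hst₀, rfl⟩ ⟨hα, hst, hhead.trans (add_comm _ _)⟩
        exact hne (Prod.ext h1.symm h2.symm)
      · exact (hmax q hq).not_gt
          (toColex_cofactor_lt_of_mem_support hJ (hf q.1 hα).2 hmem hhead ⟨hα₀, hst₀, rfl⟩)
    · exact fun h => absurd hq₀ h
  refine hred _ ?_ (hJ _ hα₀.1 q₀.2)
  rw [mem_support_iff, hcoeff]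
  exact Finsupp.mem_support_iff.mp hq₀

end StarSpan

section Criterion

variable {K} {J : Set (Mon N)} {m : ℕ} {f F : Mon N → MvPolynomial (Fin N) K}
  {t : ℕ} {u : Mon N} {p : MvPolynomial (Fin N) K}

lemma support_mono (u : Mon N) : (mono K u).support = {u} := by
  classical
  simp [mono, support_monomial]

lemma mem_spanNLE_iff : p ∈ spanNLE K J t ↔ ∀ u ∈ p.support, u ∉ J ∧ mdeg u ≤ t := by
  change p ∈ Submodule.span K ((monomial · 1) '' _) ↔ _
  rw [← restrictSupport_eq_span, mem_restrictSupport_iff]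
  rfl

lemma mono_mem_spanNLE (hu : u ∉ J) (ht : mdeg u ≤ t) : mono K u ∈ spanNLE K J t :=
  mem_spanNLE_iff.mpr fun v hv => by
    rw [support_mono, Finset.mem_singleton] at hv
    exact hv ▸ ⟨hu, ht⟩

lemma IsReducedPoly.sub {a b : MvPolynomial (Fin N) K} (ha : IsReducedPoly K J a)
    (hb : IsReducedPoly K J b) : IsReducedPoly K J (a - b) := fun u hu =>
  (Finset.mem_union.mp (support_sub _ _ _ hu)).elim (ha u) (hb u)

lemma JmMarkedBasis.eq_of_sub_mem_idealG (hB : JmMarkedBasis K J m f)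
    {a b : MvPolynomial (Fin N) K} (ha : IsReducedPoly K J a) (hb : IsReducedPoly K J b)
    (hab : a - b ∈ idealG K J f) : a = b := by
  set t := max m (a - b).totalDegree
  have hdeg : ∀ u ∈ (a - b).support, mdeg u ≤ t := fun u hu =>
    (le_totalDegree hu).trans (le_max_right _ _)
  have hN : a - b ∈ spanNLE K J t := mem_spanNLE_iff.mpr fun u hu => ⟨ha.sub hb u hu, hdeg u hu⟩
  exact sub_eq_zero.mp
    (Submodule.disjoint_def.mp (hB.2 t (le_max_left _ _)).1 _ hN ⟨hab, hdeg⟩)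

lemma JmMarkedBasis.reduces_X_mul_zero (hB : JmMarkedBasis K J m f) (hJ : StronglyStable J)
    {α : Mon N} (hα : α ∈ MinBasis J) (i : Fin N) : Reduces K J f (X i * f α) 0 := by
  obtain ⟨g, hred, hg⟩ := exists_reduces_isReducedPoly hJ hB.1.nhMarkedSet (X i * f α)
  have hXf : X i * f α ∈ idealG K J f := Ideal.mul_mem_left _ _ (Ideal.subset_span ⟨α, hα, rfl⟩)
  have : g = 0 := hB.eq_of_sub_mem_idealG hg (fun u hu => by simp at hu)
    (by simpa using sub_mem hXf hred.sub_mem_idealG)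
  exact this ▸ hred

lemma JmMarkedBasis.exists_reduces_mono (hB : JmMarkedBasis K J m f) (hJ : StronglyStable J)
    {β : Mon N} (hβ : mdeg β ≤ m) :
    ∃ g, Reduces K J f (mono K β) g ∧ ∀ u ∈ g.support, u ∉ J ∧ mdeg u ≤ m := by
  obtain ⟨g, hred, hg⟩ := exists_reduces_isReducedPoly hJ hB.1.nhMarkedSet (mono K β)
  have hmem : mono K β ∈ spanNLE K J m ⊔ GleSub K J f m := by
    rw [(hB.2 m le_rfl).2]
    intro u hu
    rw [support_mono, Finset.mem_singleton] at hu
    exact hu ▸ hβ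
  obtain ⟨p, hp, q, hq, hpq⟩ := Submodule.mem_sup.mp hmem
  have : g = p := hB.eq_of_sub_mem_idealG hg (fun u hu => (mem_spanNLE_iff.mp hp u hu).1) <| by
    rw [show g - p = q - (mono K β - g) by rw [← hpq]; ring]
    exact sub_mem hq.1 hred.sub_mem_idealG
  exact ⟨g, hred, this ▸ mem_spanNLE_iff.mp hp⟩

lemma exists_isCompletion
    (hred : ∀ β : Mon N, β ∈ J → mdeg β ≤ m → β ∉ MinBasis J →
      ∃ g, Reduces K J f (mono K β) g ∧ ∀ u ∈ g.support, u ∉ J ∧ mdeg u ≤ m) :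
    ∃ h, IsCompletion K J m f h := by
  choose! g hg using hred
  refine ⟨fun β => mono K β - g β, fun β hβ hβm hB => ?_⟩
  obtain ⟨hr, hsupp⟩ := hg β hβ hβm hB
  have hβg : coeff β (g β) = 0 := notMem_support_iff.mp fun h => (hsupp β h).1 hβ
  refine ⟨hr.sub_mem_idealG, by simp [mono, hβg], fun u hu hne => hsupp u ?_⟩
  rcases Finset.mem_union.mp (support_sub _ _ _ hu) with hu | hu
  · rw [support_mono, Finset.mem_singleton] at hu
    exact absurd hu hne
  · exact hu

lemma exists_marked_mem_idealG (hms : JmMarkedSet K J m f) (hc : IsCompletion K J m f F)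
    {β : Mon N} (hβ : β ∈ J) (hβm : mdeg β ≤ m ∨ β ∈ MinBasis J) :
    ∃ q ∈ idealG K J f, coeff β q = 1 ∧
      ∀ u ∈ q.support, u ≠ β → u ∉ J ∧ mdeg u ≤ max m (mdeg β) := by
  by_cases hB : β ∈ MinBasis J
  · exact ⟨f β, Ideal.subset_span ⟨β, hB, rfl⟩, hms β hB⟩
  · obtain ⟨h1, h2, h3⟩ := hc β hβ (hβm.resolve_right hB) hB
    exact ⟨F β, h1, h2, fun u hu hne => (h3 u hu hne).imp_right le_max_of_le_left⟩

lemma exists_between_mdeg {α γ : Mon N} (hαγ : α ≤ γ) (m : ℕ) :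
    ∃ β, α ≤ β ∧ β ≤ γ ∧ (mdeg β ≤ m ∨ β = α) ∧ (m ≤ mdeg β ∨ β = γ) := by
  by_cases hγ : mdeg γ ≤ m
  · exact ⟨γ, hαγ, le_rfl, .inl hγ, .inr rfl⟩
  by_cases hα : m ≤ mdeg α
  · exact ⟨α, le_rfl, hαγ, .inr rfl, .inl hα⟩
  have hsplit := mdeg_add α (γ - α)
  rw [add_tsub_cancel_of_le hαγ] at hsplit
  obtain ⟨δ, hδ, hdeg⟩ := exists_le_mdeg_eq (γ - α) (k := m - mdeg α) (by omega)
  refine ⟨α + δ, le_self_add, ?_, .inl ?_, .inl ?_⟩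
  · calc α + δ ≤ α + (γ - α) := add_le_add le_rfl hδ
      _ = γ := add_tsub_cancel_of_le hαγ
  all_goals rw [mdeg_add]; omega

lemma mono_mem_of_coeff_eq_one (S : Submodule K (MvPolynomial (Fin N) K))
    {q : MvPolynomial (Fin N) K} {γ : Mon N} (hq : q ∈ S) (hγ : coeff γ q = 1)
    (htail : ∀ u ∈ q.support, u ≠ γ → mono K u ∈ S) : mono K γ ∈ S := by
  have hrest : q - mono K γ ∈ S := mem_of_forall_mono_mem S fun u hu => by
    have hne : u ≠ γ := by rintro rfl; simp [mono, hγ] at hu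
    rcases Finset.mem_union.mp (support_sub _ _ _ hu) with hu | hu
    · exact htail u hu hne
    · rw [support_mono, Finset.mem_singleton] at hu
      exact absurd hu hne
  simpa using sub_mem hq hrest

/-- Shifting a marked polynomial of `(𝔊)` with head `x^β`, where `x^α ∣ x^β ∣ x^γ`, to head
`x^γ` only creates tail monomials in `𝔧` whose cofactors are `Colex`-below `η`. -/
lemma exists_mem_gleSub_coeff_eq_one (hJ : MonIdeal J) (hms : JmMarkedSet K J m f)
    (hc : IsCompletion K J m f F) (ht : m ≤ t) {γ α η : Mon N} (hd : IsStarDecomp J γ α η)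
    (hγt : mdeg γ ≤ t) :
    ∃ q ∈ GleSub K J f t, coeff γ q = 1 ∧
      ∀ u ∈ q.support, u ≠ γ → ∀ α' η', IsStarDecomp J u α' η' → toColex η' < toColex η := by
  obtain ⟨hα, -, rfl⟩ := hd
  obtain ⟨β, hαβ, hβγ, hβm, hmβ⟩ := exists_between_mdeg (le_self_add : α ≤ α + η) m
  obtain ⟨δ, hδ⟩ := exists_add_of_le hβγ
  have hβ : β ∈ J := by obtain ⟨c, rfl⟩ := exists_add_of_le hαβ; exact hJ _ hα.1 c
  obtain ⟨qβ, hqβ, hqββ, hqβtail⟩ :=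
    exists_marked_mem_idealG hms hc hβ (hβm.imp_right fun (h : β = α) => h ▸ hα)
  have hδη : δ ≤ η := le_of_add_le_add_left (a := α) <|
    calc α + δ ≤ β + δ := add_le_add hαβ le_rfl
      _ = α + η := hδ.symm
  have hdegδ := mdeg_add β δ
  rw [← hδ] at hdegδ
  refine ⟨mono K δ * qβ, ⟨Ideal.mul_mem_left _ _ hqβ, fun u hu => ?_⟩, ?_, fun u hu hne => ?_⟩
  · obtain ⟨v, hv, rfl⟩ := exists_eq_add_of_mem_support_mono_mul hu
    rw [mdeg_add]
    by_cases hvβ : v = β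
    · subst hvβ; omega
    have := (hqβtail v hv hvβ).2
    rcases hmβ with hmβ | rfl
    · rw [max_eq_right hmβ] at this; omega
    · have := this.trans (max_le ht hγt); omega
  · rw [hδ, add_comm, coeff_mono_mul, hqββ]
  · intro α' η' hd'
    have hlt := toColex_cofactor_lt_of_mem_support hJ (fun w hw hne => (hqβtail w hw hne).1)
      hu (by rwa [hδ, add_comm β] at hne) hd'
    exact hlt.trans_le (Finsupp.toColex_monotone hδη)

lemma mono_mem_spanNLE_sup_GleSub (hJ : StronglyStable J) (hms : JmMarkedSet K J m f)
    (hc : IsCompletion K J m f F) (ht : m ≤ t) {γ : Mon N} (hγ : γ ∈ J) (hγt : mdeg γ ≤ t) :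
    mono K γ ∈ spanNLE K J t ⊔ GleSub K J f t := by
  obtain ⟨α, η, hd⟩ := exists_isStarDecomp hJ hγ
  induction η using (InvImage.wf (toColex (α := Mon N)) wellFounded_lt).induction
    generalizing γ α with
  | _ η ih =>
  obtain ⟨q, hq, hqγ, htail⟩ := exists_mem_gleSub_coeff_eq_one hJ.1 hms hc ht hd hγt
  refine mono_mem_of_coeff_eq_one _ (Submodule.mem_sup_right hq) hqγ fun u hu hne => ?_
  have hdeg : mdeg u ≤ t := hq.2 u hu
  by_cases huJ : u ∈ J
  · obtain ⟨α', η', hd'⟩ := exists_isStarDecomp hJ huJ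
    exact ih η' (htail u hu hne α' η' hd') huJ hdeg α' hd'
  · exact Submodule.mem_sup_left (mono_mem_spanNLE huJ hdeg)

theorem jmMarkedBasis_of_reduces (hJ : StronglyStable J) (hms : JmMarkedSet K J m f)
    (hX : ∀ α ∈ MinBasis J, ∀ i : Fin N, (∃ j : Fin N, j < i ∧ α j ≠ 0) →
      Reduces K J f (X i * f α) 0)
    (hmono : ∀ β : Mon N, β ∈ J → mdeg β ≤ m → β ∉ MinBasis J →
      ∃ g, Reduces K J f (mono K β) g ∧ ∀ u ∈ g.support, u ∉ J ∧ mdeg u ≤ m) :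
    JmMarkedBasis K J m f := by
  obtain ⟨F, hc⟩ := exists_isCompletion hmono
  have hG := idealG_le_starSpan (mono_mul_mem_starSpan hJ.1 hms.nhMarkedSet hX)
  refine ⟨hms, fun t ht => ⟨Submodule.disjoint_def.mpr fun p hpN hpG => ?_, ?_⟩⟩
  · exact eq_zero_of_mem_starSpan hJ.1 hms.nhMarkedSet (hG hpG.1)
      fun u hu => (mem_spanNLE_iff.mp hpN u hu).1
  refine le_antisymm (sup_le (fun p hp u hu => (mem_spanNLE_iff.mp hp u hu).2) inf_le_right)
    fun p hp => mem_of_forall_mono_mem _ fun u hu => ?_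
  by_cases huJ : u ∈ J
  · exact mono_mem_spanNLE_sup_GleSub hJ hms hc ht huJ (hp u hu)
  · exact Submodule.mem_sup_left (mono_mem_spanNLE huJ (hp u hu))

end Criterion

theorem markedBasis_criterion_general {n : ℕ} (K : Type) [Field K]
    (𝔧 : Set (Mon n)) (m : ℕ) (f : Mon n → MvPolynomial (Fin n) K)
    (hss : StronglyStable 𝔧) (hms : JmMarkedSet K 𝔧 m f) :
    JmMarkedBasis K 𝔧 m f ↔
    ((∀ α ∈ MinBasis 𝔧, ∀ i : Fin n, (∃ j : Fin n, j < i ∧ α j ≠ 0) →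
        Reduces K 𝔧 f (MvPolynomial.X i * f α) 0) ∧
      (∀ β : Mon n, β ∈ 𝔧 → mdeg β ≤ m → β ∉ MinBasis 𝔧 →
        ∃ gβ, Reduces K 𝔧 f (mono K β) gβ ∧
          ∀ u ∈ gβ.support, u ∉ 𝔧 ∧ mdeg u ≤ m)) :=
  ⟨fun hB => ⟨fun _ hα i _ => hB.reduces_X_mul_zero hss hα i,
      fun _ _ hβ _ => hB.exists_reduces_mono hss hβ⟩,
    fun ⟨hX, hmono⟩ => jmMarkedBasis_of_reduces hss hms hX hmono⟩

/-- effective criterion. A `[𝔧,m]`-marked set `𝔊` is a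
`[𝔧,m]`-marked basis iff (i) `x_i f_α` reduces to `0` for every `f_α ∈ 𝔊` and
every variable `x_i > min(x^α)`, and (ii) every `x^β ∈ 𝔧_{≤m} \ B_𝔧` reduces
to a polynomial supported in `N(𝔧)_{≤m}`. -/
theorem markedBasis_criterion {n : ℕ} (K : Type) [Field K]
    (𝔧 : Set (Mon n)) (m : ℕ) (f : Mon n → MvPolynomial (Fin n) K)
    (hss : StronglyStable 𝔧) (hm : 0 < m) (hms : JmMarkedSet K 𝔧 m f) :
    JmMarkedBasis K 𝔧 m f ↔
    ((∀ α ∈ MinBasis 𝔧, ∀ i : Fin n, (∃ j : Fin n, j < i ∧ α j ≠ 0) →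
        Reduces K 𝔧 f (MvPolynomial.X i * f α) 0) ∧
      (∀ β : Mon n, β ∈ 𝔧 → mdeg β ≤ m → β ∉ MinBasis 𝔧 →
        ∃ gβ, Reduces K 𝔧 f (mono K β) gβ ∧
          ∀ u ∈ gβ.support, u ∉ 𝔧 ∧ mdeg u ≤ m)) :=
  markedBasis_criterion_general K 𝔧 m f hss hms

end Paper
end

section
/- Let 𝔧 be a strongly stable ideal in R and m a positive integer such that no monomial of degree m+1 in the minimal basis B_𝔧 is divisible by x_1. If 𝔊 is a [𝔧,m]-marked basis, then for every monomial x^β the normal form Nf(x^β) has support contained in N(𝔧)_{≤ max{m−1, |β|}}. Consequently, a [𝔧,m]-marked set 𝔊 is a [𝔧,m]-marked basis if and only if it is a [𝔧,m−1]-marked basis. -/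
open MvPolynomial

namespace Paper

variable {N : ℕ}

variable (K : Type) [Field K]

/-! Only normal forms of polynomials of degree `< m` are at stake; let `p` be the degree-`m` part
of such a normal form `g`. Since no minimal generator of degree `m + 1` involves `x_1`, strong
stability gives `x_1 u ∉ 𝔧` for every `u ∉ 𝔧` of degree `m`, so `x_1 p` lies in `⟨N(𝔧)_{≤ m+1}⟩`
while being congruent modulo `(𝔊)` to a polynomial of degree `≤ m`. Uniqueness of normal forms in
degree `m + 1` forces `x_1 p` to have degree `≤ m`, hence `p = 0`. Applied to the tails
`x^α - f_α` and to the decompositions in degree `m`, this gives the `[𝔧, m-1]`-marked basis. -/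

lemma mdeg_eq_degree (u : Mon N) : mdeg u = u.degree := rfl

lemma MonIdeal.mem_of_le {J : Set (Mon N)} (hJ : MonIdeal J) {u v : Mon N} (hu : u ∈ J)
    (h : u ≤ v) : v ∈ J := by
  obtain ⟨d, rfl⟩ := exists_add_of_le h
  exact hJ u hu d

lemma exists_mem_minBasis_le {J : Set (Mon N)} {v : Mon N} (hv : v ∈ J) :
    ∃ b ∈ MinBasis J, b ≤ v := by
  obtain ⟨b, ⟨hbJ, hbv⟩, hmin⟩ :=
    wellFounded_lt.has_min {w | w ∈ J ∧ w ≤ v} ⟨v, hv, le_rfl⟩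
  refine ⟨b, ⟨hbJ, fun w hwJ hwb => ?_⟩, hbv⟩
  by_contra hne
  exact hmin w ⟨hwJ, hwb.trans hbv⟩ (lt_of_le_of_ne hwb hne)

theorem StronglyStable.add_single_zero_notMem {n m : ℕ} {𝔧 : Set (Mon (n + 1))}
    (hss : StronglyStable 𝔧) (hx1 : ∀ b ∈ MinBasis 𝔧, mdeg b = m + 1 → b 0 = 0)
    {u : Mon (n + 1)} (hu : u ∉ 𝔧) (hdeg : mdeg u = m) :
    u + Finsupp.single 0 1 ∉ 𝔧 := by
  intro h
  obtain ⟨b, hbB, hbu⟩ := exists_mem_minBasis_le h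
  have hbu' : ∀ i, b i ≤ u i + Finsupp.single 0 1 i := fun i => hbu i
  obtain ⟨i, hi⟩ : ∃ i, u i < b i := by
    by_contra! hle
    exact hu (hss.1.mem_of_le hbB.1 hle)
  have hb0 : b 0 = u 0 + 1 := by
    have hbi := hbu' i
    rcases eq_or_ne i 0 with rfl | hi0
    · rw [Finsupp.single_eq_same] at hbi
      omega
    · rw [Finsupp.single_eq_of_ne hi0] at hbi
      omega
  obtain ⟨j, hj0, hj⟩ : ∃ j, j ≠ 0 ∧ b j < u j := by
    by_contra! hc
    have hb : b = u + Finsupp.single 0 1 := by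
      refine le_antisymm hbu fun k => ?_
      rcases eq_or_ne k 0 with rfl | hk0
      · simp [hb0]
      · simpa [Finsupp.single_eq_of_ne hk0] using hc k hk0
    have := hx1 b hbB (by simp [hb, mdeg_eq_degree, ← hdeg])
    omega
  -- the elementary move `x_1 ↦ x_j` takes `b` to a generator `b' ∈ 𝔧` dividing `u`
  set b' := b - Finsupp.single 0 1 + Finsupp.single j 1
  have hmove : b + Finsupp.single j 1 = b' + Finsupp.single 0 1 := by
    rw [add_right_comm, tsub_add_cancel_of_le]
    exact Finsupp.single_le_iff.mpr (by omega)
  have hb'J : b' ∈ 𝔧 :=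
    hss.2 b hbB.1 b' (.single ⟨0, j, Fin.pos_of_ne_zero hj0, hmove⟩)
  refine hu (hss.1.mem_of_le hb'J (le_of_add_le_add_right (a := Finsupp.single 0 1) ?_))
  rw [← hmove]
  intro k
  rcases eq_or_ne k j with rfl | hkj
  · simpa [Finsupp.single_eq_of_ne hj0] using hj
  · simpa [Finsupp.single_eq_of_ne hkj] using hbu' k

variable {K}

lemma degLE_eq_restrictTotalDegree (t : ℕ) :
    degLE K N t = restrictTotalDegree (Fin N) K t := rfl

lemma mem_degLE_iff {t : ℕ} {g : MvPolynomial (Fin N) K} :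
    g ∈ degLE K N t ↔ g.totalDegree ≤ t := by
  rw [degLE_eq_restrictTotalDegree, mem_restrictTotalDegree]

lemma degLE_mono {t t' : ℕ} (h : t ≤ t') : degLE K N t ≤ degLE K N t' :=
  fun _ hg u hu => (hg u hu).trans h

lemma spanNLE_eq_restrictSupport (J : Set (Mon N)) (t : ℕ) :
    spanNLE K J t = restrictSupport K {u | u ∉ J ∧ mdeg u ≤ t} :=
  (restrictSupport_eq_span _ _).symm

lemma mem_spanNLE {J : Set (Mon N)} {t : ℕ} {g : MvPolynomial (Fin N) K} :
    g ∈ spanNLE K J t ↔ ∀ u ∈ g.support, u ∉ J ∧ mdeg u ≤ t := by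
  rw [spanNLE_eq_restrictSupport, mem_restrictSupport_iff]
  rfl

lemma spanNLE_mono (J : Set (Mon N)) {t t' : ℕ} (h : t ≤ t') :
    spanNLE K J t ≤ spanNLE K J t' := by
  simp only [spanNLE_eq_restrictSupport]
  exact restrictSupport_mono K fun u hu => ⟨hu.1, hu.2.trans h⟩

lemma spanNLE_le_degLE (J : Set (Mon N)) (t : ℕ) : spanNLE K J t ≤ degLE K N t := by
  rw [spanNLE_eq_restrictSupport, degLE_eq_restrictTotalDegree]
  exact restrictSupport_mono K fun u hu => hu.2

lemma GleSub_mono (J : Set (Mon N)) (f : Mon N → MvPolynomial (Fin N) K) {t t' : ℕ}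
    (h : t ≤ t') : GleSub K J f t ≤ GleSub K J f t' :=
  inf_le_inf_left _ (degLE_mono h)

lemma totalDegree_mono (u : Mon N) : (mono K u).totalDegree = mdeg u :=
  totalDegree_monomial u one_ne_zero

lemma mono_mem_degLE (u : Mon N) : mono K u ∈ degLE K N (mdeg u) := by
  rw [mem_degLE_iff, totalDegree_mono]

lemma sub_homogeneousComponent_mem_degLE {t : ℕ} {g : MvPolynomial (Fin N) K}
    (hg : g ∈ degLE K N t) : g - homogeneousComponent t g ∈ degLE K N (t - 1) := by
  intro u hu
  rw [mem_support_iff, coeff_sub, coeff_homogeneousComponent] at hu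
  have hut : u.degree ≠ t := fun h => hu (by rw [if_pos h, sub_self])
  rw [if_neg hut, sub_zero, ← mem_support_iff] at hu
  have := hg u hu
  rw [mdeg_eq_degree] at this ⊢
  omega

lemma mem_support_mono_sub {α u : Mon N} {p : MvPolynomial (Fin N) K} (hp : coeff α p = 1) :
    u ∈ (mono K α - p).support ↔ u ∈ p.support ∧ u ≠ α := by
  rcases eq_or_ne u α with rfl | hu
  · simp [mono, hp]
  · simp [mono, coeff_monomial, Ne.symm hu, hu]

lemma jmMarkedSet_iff {J : Set (Mon N)} {m : ℕ} {f : Mon N → MvPolynomial (Fin N) K} :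
    JmMarkedSet K J m f ↔ ∀ α ∈ MinBasis J,
      coeff α (f α) = 1 ∧ mono K α - f α ∈ spanNLE K J (max m (mdeg α)) := by
  refine forall₂_congr fun α _ => and_congr_right fun hα => ?_
  simp only [mem_spanNLE, mem_support_mono_sub hα, and_imp]

theorem JmMarkedBasis.mem_spanNLE_of_sub_mem {J : Set (Mon N)} {m : ℕ}
    {f : Mon N → MvPolynomial (Fin N) K} (hB : JmMarkedBasis K J m f) {t t' : ℕ}
    (hmt : m ≤ t) (htt' : t ≤ t') {a r : MvPolynomial (Fin N) K}
    (ha : a ∈ spanNLE K J t') (hr : r ∈ degLE K N t) (har : a - r ∈ idealG K J f) :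
    a ∈ spanNLE K J t := by
  rw [← (hB.2 t hmt).2] at hr
  obtain ⟨s, hs, h, hh, rfl⟩ := Submodule.mem_sup.mp hr
  have hs' := spanNLE_mono J htt' hs
  have hdiff : a - s ∈ spanNLE K J t' ⊓ GleSub K J f t' := by
    refine ⟨sub_mem ha hs', ?_, spanNLE_le_degLE J t' (sub_mem ha hs')⟩
    rw [show a - s = (a - (s + h)) + h by ring]
    exact add_mem har hh.1
  rw [(hB.2 t' (hmt.trans htt')).1.eq_bot, Submodule.mem_bot, sub_eq_zero] at hdiff
  rwa [hdiff]

section SmallestVariable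

variable {n m : ℕ} {𝔧 : Set (Mon (n + 1))} {f : Mon (n + 1) → MvPolynomial (Fin (n + 1)) K}

theorem JmMarkedBasis.mem_spanNLE_pred (hB : JmMarkedBasis K 𝔧 m f) (hss : StronglyStable 𝔧)
    (hx1 : ∀ b ∈ MinBasis 𝔧, mdeg b = m + 1 → b 0 = 0) {r g : MvPolynomial (Fin (n + 1)) K}
    (hr : r ∈ degLE K (n + 1) (m - 1)) (hg : g ∈ spanNLE K 𝔧 m)
    (hrg : r - g ∈ idealG K 𝔧 f) : g ∈ spanNLE K 𝔧 (m - 1) := by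
  rcases Nat.eq_zero_or_pos m with rfl | hm
  · exact hg
  set p := homogeneousComponent m g
  have hq : g - p ∈ degLE K (n + 1) (m - 1) :=
    sub_homogeneousComponent_mem_degLE (spanNLE_le_degLE 𝔧 m hg)
  have hXp : X 0 * p ∈ spanNLE K 𝔧 (m + 1) := by
    rw [mem_spanNLE, support_X_mul]
    intro _ hv
    obtain ⟨u, hu, rfl⟩ := Finset.mem_map.mp hv
    rw [mem_support_iff, coeff_homogeneousComponent] at hu
    have hum : u.degree = m := by
      by_contra h
      exact hu (if_neg h)
    rw [if_pos hum, ← mem_support_iff] at hu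
    refine ⟨?_, by simp [mdeg_eq_degree, hum, add_comm]⟩
    rw [addLeftEmbedding_apply, add_comm (Finsupp.single 0 1) u]
    exact hss.add_single_zero_notMem hx1 (mem_spanNLE.mp hg u hu).1 hum
  have hXr : X 0 * (r - (g - p)) ∈ degLE K (n + 1) m := by
    rw [mem_degLE_iff] at hr hq ⊢
    calc (X 0 * (r - (g - p))).totalDegree
        ≤ (X 0 : MvPolynomial (Fin (n + 1)) K).totalDegree + (r - (g - p)).totalDegree :=
          totalDegree_mul _ _
      _ ≤ 1 + (m - 1) :=
          add_le_add (totalDegree_X 0).le ((totalDegree_sub _ _).trans (max_le hr hq))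
      _ = m := by omega
  have hXp_le : X 0 * p ∈ spanNLE K 𝔧 m := by
    refine hB.mem_spanNLE_of_sub_mem le_rfl m.le_succ hXp hXr ?_
    rw [show X 0 * p - X 0 * (r - (g - p)) = -(X 0 * (r - g)) by ring]
    exact neg_mem (Ideal.mul_mem_left _ _ hrg)
  have hp : p = 0 := by
    have hhom := (isHomogeneous_X K (0 : Fin (n + 1))).mul (homogeneousComponent_isHomogeneous m g)
    by_contra hp0
    have := mem_degLE_iff.mp (spanNLE_le_degLE 𝔧 m hXp_le)
    rw [hhom.totalDegree (mul_ne_zero (X_ne_zero 0) hp0)] at this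
    omega
  rw [hp, sub_zero] at hq
  exact mem_spanNLE.mpr fun u hu => ⟨(mem_spanNLE.mp hg u hu).1, hq u hu⟩

theorem JmMarkedBasis.mem_spanNLE_max_pred (hB : JmMarkedBasis K 𝔧 m f)
    (hss : StronglyStable 𝔧) (hx1 : ∀ b ∈ MinBasis 𝔧, mdeg b = m + 1 → b 0 = 0)
    {d : ℕ} {r g : MvPolynomial (Fin (n + 1)) K} (hr : r ∈ degLE K (n + 1) d)
    (hg : g ∈ spanNLE K 𝔧 (max m d)) (hrg : r - g ∈ idealG K 𝔧 f) :
    g ∈ spanNLE K 𝔧 (max (m - 1) d) := by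
  rcases le_or_gt m d with hmd | hdm
  · rwa [max_eq_right hmd, ← max_eq_right (hmd.trans' (m.sub_le 1))] at hg
  · have hd : d ≤ m - 1 := Nat.le_sub_one_of_lt hdm
    rw [max_eq_left hdm.le] at hg
    rw [max_eq_left hd]
    exact hB.mem_spanNLE_pred hss hx1 (degLE_mono hd hr) hg hrg

theorem JmMarkedBasis.decomposition_pred (hB : JmMarkedBasis K 𝔧 m f) (hss : StronglyStable 𝔧)
    (hx1 : ∀ b ∈ MinBasis 𝔧, mdeg b = m + 1 → b 0 = 0) :
    Disjoint (spanNLE K 𝔧 (m - 1)) (GleSub K 𝔧 f (m - 1)) ∧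
      spanNLE K 𝔧 (m - 1) ⊔ GleSub K 𝔧 f (m - 1) = degLE K (n + 1) (m - 1) := by
  obtain ⟨hdisj, hsup⟩ := hB.2 m le_rfl
  refine ⟨hdisj.mono (spanNLE_mono 𝔧 (m.sub_le 1)) (GleSub_mono 𝔧 f (m.sub_le 1)),
    le_antisymm (sup_le (spanNLE_le_degLE 𝔧 _) inf_le_right) fun r hr => ?_⟩
  have hr' : r ∈ spanNLE K 𝔧 m ⊔ GleSub K 𝔧 f m := hsup ▸ degLE_mono (m.sub_le 1) hr
  obtain ⟨s, hs, h, hh, rfl⟩ := Submodule.mem_sup.mp hr'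
  have hs' : s ∈ spanNLE K 𝔧 (m - 1) :=
    hB.mem_spanNLE_pred hss hx1 hr hs (by simpa using hh.1)
  have hh' : h ∈ degLE K (n + 1) (m - 1) := by
    simpa using sub_mem hr (spanNLE_le_degLE 𝔧 _ hs')
  exact Submodule.mem_sup.mpr ⟨s, hs', h, ⟨hh.1, hh'⟩, rfl⟩

end SmallestVariable

theorem markedBasis_drop_degree_general {n : ℕ} (K : Type) [Field K]
    (𝔧 : Set (Mon (n + 1))) (m : ℕ) (f : Mon (n + 1) → MvPolynomial (Fin (n + 1)) K)
    (hss : StronglyStable 𝔧)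
    (hx1 : ∀ b ∈ MinBasis 𝔧, mdeg b = m + 1 → b 0 = 0) :
    (JmMarkedBasis K 𝔧 m f →
      ∀ (β : Mon (n + 1)) (g' : MvPolynomial (Fin (n + 1)) K),
        IsReducedForm K 𝔧 m f (mono K β) g' →
        ∀ u ∈ g'.support, mdeg u ≤ max (m - 1) (mdeg β)) ∧
    (JmMarkedSet K 𝔧 m f →
      (JmMarkedBasis K 𝔧 m f ↔ JmMarkedBasis K 𝔧 (m - 1) f)) := by
  refine ⟨fun hB β g' ⟨hg', hβg'⟩ => ?_, fun hset => ⟨fun hB => ⟨?_, fun t ht => ?_⟩,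
    fun hB' => ⟨hset, fun t ht => hB'.2 t ((m.sub_le 1).trans ht)⟩⟩⟩
  · rw [totalDegree_mono] at hg'
    have := hB.mem_spanNLE_max_pred hss hx1 (mono_mem_degLE β) (mem_spanNLE.mpr hg') hβg'
    exact fun u hu => (mem_spanNLE.mp this u hu).2
  · rw [jmMarkedSet_iff] at hset ⊢
    refine fun α hα => ⟨(hset α hα).1, hB.mem_spanNLE_max_pred hss hx1 (mono_mem_degLE α)
      (hset α hα).2 ?_⟩
    rw [sub_sub_cancel]
    exact Ideal.subset_span ⟨α, hα, rfl⟩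
  · rcases le_or_gt m t with hmt | htm
    · exact hB.2 t hmt
    · obtain rfl : t = m - 1 := by omega
      exact hB.decomposition_pred hss hx1

/-- if no minimal generator of `𝔧` of degree `m+1` is divisible
by the smallest variable `x_1`, then the normal forms of monomials modulo a
`[𝔧,m]`-marked basis have degree `≤ max{m-1, |β|}`, and a `[𝔧,m]`-marked set
is a `[𝔧,m]`-marked basis iff it is a `[𝔧,m-1]`-marked basis.
(Here `R = K[x_1,…,x_{n+1}]` and `x_1` is the variable of index `0`.) -/
theorem markedBasis_drop_degree {n : ℕ} (K : Type) [Field K]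
    (𝔧 : Set (Mon (n + 1))) (m : ℕ) (f : Mon (n + 1) → MvPolynomial (Fin (n + 1)) K)
    (hss : StronglyStable 𝔧) (hm : 0 < m)
    (hx1 : ∀ b ∈ MinBasis 𝔧, mdeg b = m + 1 → b 0 = 0) :
    (JmMarkedBasis K 𝔧 m f →
      ∀ (β : Mon (n + 1)) (g' : MvPolynomial (Fin (n + 1)) K),
        IsReducedForm K 𝔧 m f (mono K β) g' →
        ∀ u ∈ g'.support, mdeg u ≤ max (m - 1) (mdeg β)) ∧
    (JmMarkedSet K 𝔧 m f →
      (JmMarkedBasis K 𝔧 m f ↔ JmMarkedBasis K 𝔧 (m - 1) f)) :=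
  markedBasis_drop_degree_general K 𝔧 m f hss hx1

end Paper
end
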